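/- Let F : ℝ^n → ℝ be differentiable with F ∈ S_{μ, L_F}, μ > 0, let N be a real n×n skew-symmetric matrix and B a real n×n matrix with N = B^sym − 2B, B^sym = B + Bᵀ, L_{B^sym} = ‖B^sym‖, and let x* satisfy ∇F(x*) + N x* = 0. Suppose 0 < α ≤ μ/(2L_{B^sym}) and the points x̂_{k+1}, y_{k+1} are generated from (x_k, y_k) by (x̂_{k+1} − x_k)/α = y_k − x̂_{k+1} and (y_{k+1} − y_k)/α = x̂_{k+1} − y_{k+1} − (1/μ)(∇F(x̂_{k+1}) + B^sym y_k − 2B y_{k+1}). Then, with E^{αB}(x,y) = D_F(x,x*) + (1/2)‖y − x*‖²_{μI − αB^sym}, one has E^{αB}(x̂_{k+1}, y_{k+1}) − E^{αB}(x_k, y_k) ≤ −(α/2) E^{αB}(x̂_{k+1}, y_{k+1}) − α⟨∇F(x̂_{k+1}) − ∇F(x*), y_{k+1} − y_k⟩ − (μ/4)‖y_{k+1} − y_k‖². -/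

import Mathlib

/-!
Write `u = y - x*`, `u₊ = y₊ - x*`, `w = x̂₊ - x*`, `G = ∇F(x̂₊) - ∇F(x*)` and
`M = μI - αBˢʸᵐ`. By the three-point identity for Bregman divergences and convexity, the
`D_F` part of the energy changes by at most `α⟨G, y - x̂₊⟩`. Since `∇F(x*) = (B - Bᵀ)x*`, the
`y`-step reads `μ(u₊ - u) = α(μ(x̂₊ - y₊) - G - Bˢʸᵐu + 2Bu₊)`; pairing it with `u₊` in the
`M`-inner product, every `B`-term cancels because `⟨v, Bˢʸᵐv⟩ = 2⟨v, Bv⟩`, and the quadratic part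
changes by exactly `α(μ⟨u₊, x̂₊ - y₊⟩ - ⟨G, u₊⟩) - ½‖u₊ - u‖²_M`. The step size bound
`α‖Bˢʸᵐ‖ ≤ μ/2` puts `M` between `μ/2` and `3μ/2`, and strong convexity,
`⟨G, w⟩ ≥ D_F(x̂₊, x*) + μ/2‖w‖²`, together with Young's inequality for `⟨u₊, w⟩`, absorbs the
remaining terms into `-(α/2)E(x̂₊, y₊)`.
-/

open Matrix

/-- The spectral norm (ℓ²-operator norm) of a real square matrix. -/
noncomputable def specNorm {n : ℕ} (M : Matrix (Fin n) (Fin n) ℝ) : ℝ :=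
  ‖Matrix.toEuclideanCLM (𝕜 := ℝ) M‖

/-- The continuous linear functional `v ↦ ⟨z, v⟩` on `ℝⁿ`. -/
noncomputable def dpCLM {m : ℕ} (z : Fin m → ℝ) : (Fin m → ℝ) →L[ℝ] ℝ :=
  LinearMap.toContinuousLinearMap
    { toFun := fun v => z ⬝ᵥ v
      map_add' := fun a b => by simp [dotProduct_add]
      map_smul' := fun c a => by simp [dotProduct_smul] }

section

variable {ι : Type*} [Fintype ι]

theorem dotProduct_self_nonneg (v : ι → ℝ) : 0 ≤ v ⬝ᵥ v := by
  simpa using dotProduct_self_star_nonneg v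

theorem two_mul_dotProduct_le_add (v w : ι → ℝ) : 2 * (v ⬝ᵥ w) ≤ v ⬝ᵥ v + w ⬝ᵥ w := by
  have := dotProduct_self_nonneg (v - w)
  simp only [sub_dotProduct, dotProduct_sub, dotProduct_comm w v] at this
  linarith

section CommRing

variable {R : Type*} [CommRing R]

theorem dotProduct_mulVec_comm_of_isSymm {A : Matrix ι ι R} (hA : A.IsSymm) (v w : ι → R) :
    v ⬝ᵥ A *ᵥ w = w ⬝ᵥ A *ᵥ v := by
  rw [dotProduct_mulVec, ← mulVec_transpose, hA.eq, dotProduct_comm]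

theorem dotProduct_sub_mulVec_sub_of_isSymm {A : Matrix ι ι R} (hA : A.IsSymm) (v d : ι → R) :
    (v - d) ⬝ᵥ A *ᵥ (v - d) = v ⬝ᵥ A *ᵥ v - 2 * (v ⬝ᵥ A *ᵥ d) + d ⬝ᵥ A *ᵥ d := by
  simp only [mulVec_sub, sub_dotProduct, dotProduct_sub, dotProduct_mulVec_comm_of_isSymm hA d v]
  ring

theorem dotProduct_add_transpose_mulVec_self (B : Matrix ι ι R) (v : ι → R) :
    v ⬝ᵥ (B + Bᵀ) *ᵥ v = 2 * (v ⬝ᵥ B *ᵥ v) := by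
  rw [add_mulVec, dotProduct_add, mulVec_transpose, dotProduct_comm v (v ᵥ* B),
    ← dotProduct_mulVec]
  ring

theorem dotProduct_smul_one_sub_smul_mulVec [DecidableEq ι] (μ α : R) (S : Matrix ι ι R)
    (v w : ι → R) : v ⬝ᵥ (μ • 1 - α • S) *ᵥ w = μ * (v ⬝ᵥ w) - α * (v ⬝ᵥ S *ᵥ w) := by
  simp only [sub_mulVec, smul_mulVec, one_mulVec, dotProduct_sub, dotProduct_smul, smul_eq_mul]

end CommRing

def bregman (F : (ι → ℝ) → ℝ) (g : (ι → ℝ) → ι → ℝ) (x y : ι → ℝ) : ℝ :=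
  F x - F y - g y ⬝ᵥ (x - y)

section Bregman

variable (F : (ι → ℝ) → ℝ) (g : (ι → ℝ) → ι → ℝ)

theorem bregman_sub_bregman (x y z : ι → ℝ) :
    bregman F g x z - bregman F g y z = (g x - g z) ⬝ᵥ (x - y) - bregman F g y x := by
  simp only [bregman, sub_dotProduct, dotProduct_sub]
  ring

theorem bregman_sub_bregman_le_of_sub_eq_smul (hF : ∀ x y, 0 ≤ bregman F g x y) {α : ℝ}
    {x x' y : ι → ℝ} (hstep : x' - x = α • (y - x')) (z : ι → ℝ) :
    bregman F g x' z - bregman F g x z ≤ α * ((g x' - g z) ⬝ᵥ (y - x')) := by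
  have h := bregman_sub_bregman F g x' x z
  rw [hstep, dotProduct_smul, smul_eq_mul] at h
  linarith [hF x x']

theorem bregman_add_half_mul_dotProduct_self_le {μ : ℝ}
    (hF : ∀ x y, μ / 2 * ((x - y) ⬝ᵥ (x - y)) ≤ bregman F g x y) (x z : ι → ℝ) :
    bregman F g x z + μ / 2 * ((x - z) ⬝ᵥ (x - z)) ≤ (g x - g z) ⬝ᵥ (x - z) := by
  have hzz : bregman F g z z = 0 := by simp [bregman]
  have h := bregman_sub_bregman F g x z z
  have hzx := hF z x
  rw [← neg_sub x z, neg_dotProduct, dotProduct_neg, neg_neg] at hzx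
  linarith

end Bregman

theorem agss_residual_eq (B : Matrix ι ι ℝ) {gs xs : ι → ℝ}
    (hxs : gs + ((B + Bᵀ) - (2 : ℝ) • B) *ᵥ xs = 0) (gx y y' : ι → ℝ) :
    gx + (B + Bᵀ) *ᵥ y - (2 : ℝ) • B *ᵥ y'
      = (gx - gs) + (B + Bᵀ) *ᵥ (y - xs) - (2 : ℝ) • B *ᵥ (y' - xs) := by
  rw [sub_mulVec, smul_mulVec] at hxs
  rw [mulVec_sub, mulVec_sub]
  linear_combination (norm := module) hxs

theorem agss_quadratic_energy_sub [DecidableEq ι] {μ α : ℝ} (hμ : μ ≠ 0) (B : Matrix ι ι ℝ)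
    (u u' w G : ι → ℝ)
    (hstep : u' - u = α • (w - u' - (1 / μ) • (G + (B + Bᵀ) *ᵥ u - (2 : ℝ) • B *ᵥ u'))) :
    1 / 2 * (u' ⬝ᵥ (μ • 1 - α • (B + Bᵀ)) *ᵥ u') - 1 / 2 * (u ⬝ᵥ (μ • 1 - α • (B + Bᵀ)) *ᵥ u)
      = α * (μ * (u' ⬝ᵥ w - u' ⬝ᵥ u') - G ⬝ᵥ u')
        - 1 / 2 * ((u' - u) ⬝ᵥ (μ • 1 - α • (B + Bᵀ)) *ᵥ (u' - u)) := by
  set S := B + Bᵀ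
  set M := μ • (1 : Matrix ι ι ℝ) - α • S
  have hM : M.IsSymm := by
    simp only [M, S, IsSymm, transpose_sub, transpose_smul, transpose_one, transpose_add,
      transpose_transpose, add_comm Bᵀ]
  have hmove : μ * (u' ⬝ᵥ (u' - u))
      = α * (μ * (u' ⬝ᵥ w - u' ⬝ᵥ u') - u' ⬝ᵥ G - u' ⬝ᵥ S *ᵥ u + 2 * (u' ⬝ᵥ B *ᵥ u')) := by
    rw [hstep]
    simp only [dotProduct_smul, dotProduct_sub, dotProduct_add, smul_eq_mul]
    field_simp
    ring
  have hMmove : u' ⬝ᵥ M *ᵥ (u' - u)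
      = μ * (u' ⬝ᵥ (u' - u)) - α * (u' ⬝ᵥ S *ᵥ u' - u' ⬝ᵥ S *ᵥ u) := by
    rw [← dotProduct_sub, ← mulVec_sub]
    exact dotProduct_smul_one_sub_smul_mulVec μ α S u' (u' - u)
  have hS : u' ⬝ᵥ S *ᵥ u' = 2 * (u' ⬝ᵥ B *ᵥ u') := dotProduct_add_transpose_mulVec_self B u'
  have hexpand := dotProduct_sub_mulVec_sub_of_isSymm hM u' (u' - u)
  rw [sub_sub_cancel] at hexpand
  rw [dotProduct_comm G u']
  linear_combination -hexpand / 2 + hMmove + hmove - α * hS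

end

theorem abs_dotProduct_mulVec_self_le_specNorm {n : ℕ} (S : Matrix (Fin n) (Fin n) ℝ)
    (v : Fin n → ℝ) : |v ⬝ᵥ S *ᵥ v| ≤ specNorm S * (v ⬝ᵥ v) := by
  set T := Matrix.toEuclideanCLM (𝕜 := ℝ) S
  have hquad : v ⬝ᵥ S *ᵥ v = inner ℝ (T (WithLp.toLp 2 v)) (WithLp.toLp 2 v) := rfl
  have hnorm : v ⬝ᵥ v = ‖WithLp.toLp 2 v‖ ^ 2 := by
    rw [← real_inner_self_eq_norm_sq]
    rfl
  rw [hquad, hnorm, sq, ← mul_assoc]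
  exact (abs_real_inner_le_norm _ _).trans
    (mul_le_mul_of_nonneg_right (T.le_opNorm _) (norm_nonneg _))

theorem dotProduct_smul_one_sub_smul_mulVec_self_bounds {n : ℕ} {μ α : ℝ}
    (S : Matrix (Fin n) (Fin n) ℝ) (hα : 0 ≤ α) (hαS : α * specNorm S ≤ μ / 2)
    (v : Fin n → ℝ) :
    μ / 2 * (v ⬝ᵥ v) ≤ v ⬝ᵥ (μ • 1 - α • S) *ᵥ v ∧
      v ⬝ᵥ (μ • 1 - α • S) *ᵥ v ≤ 3 * μ / 2 * (v ⬝ᵥ v) := by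
  rw [dotProduct_smul_one_sub_smul_mulVec]
  obtain ⟨hlo, hhi⟩ := abs_le.mp (abs_dotProduct_mulVec_self_le_specNorm S v)
  have hsmall := mul_le_mul_of_nonneg_right hαS (dotProduct_self_nonneg v)
  constructor <;> nlinarith [mul_le_mul_of_nonneg_left hlo hα, mul_le_mul_of_nonneg_left hhi hα]

theorem agss_one_step_decay_general
    {n : ℕ} (μ α : ℝ) (hμ : 0 < μ)
    (F : (Fin n → ℝ) → ℝ) (gradF : (Fin n → ℝ) → (Fin n → ℝ))
    (hlower : ∀ x y : Fin n → ℝ,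
      μ / 2 * ((x - y) ⬝ᵥ (x - y)) ≤ F x - F y - gradF y ⬝ᵥ (x - y))
    (N B : Matrix (Fin n) (Fin n) ℝ)
    (hNB : N = (B + Bᵀ) - (2 : ℝ) • B)
    (xs : Fin n → ℝ) (hxs : gradF xs + N.mulVec xs = 0)
    (hα0 : 0 < α) (hα1 : α ≤ μ / (2 * specNorm (B + Bᵀ)))
    (xk yk xhat yk1 : Fin n → ℝ)
    (hstep1 : xhat - xk = α • (yk - xhat))
    (hstep2 : yk1 - yk =
      α • (xhat - yk1 - (1 / μ) • (gradF xhat + (B + Bᵀ).mulVec yk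
        - (2 : ℝ) • B.mulVec yk1))) :
    ((F xhat - F xs - gradF xs ⬝ᵥ (xhat - xs))
        + (1 / 2) * ((yk1 - xs) ⬝ᵥ ((μ • 1 - α • (B + Bᵀ)).mulVec (yk1 - xs))))
      - ((F xk - F xs - gradF xs ⬝ᵥ (xk - xs))
        + (1 / 2) * ((yk - xs) ⬝ᵥ ((μ • 1 - α • (B + Bᵀ)).mulVec (yk - xs))))
      ≤ -(α / 2 * ((F xhat - F xs - gradF xs ⬝ᵥ (xhat - xs))
            + (1 / 2) * ((yk1 - xs) ⬝ᵥ ((μ • 1 - α • (B + Bᵀ)).mulVec (yk1 - xs)))))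
        - α * ((gradF xhat - gradF xs) ⬝ᵥ (yk1 - yk))
        - μ / 4 * ((yk1 - yk) ⬝ᵥ (yk1 - yk)) := by
  subst hNB
  have hconvex : ∀ x y, 0 ≤ bregman F gradF x y := fun x y =>
    (mul_nonneg (half_pos hμ).le (dotProduct_self_nonneg _)).trans (hlower x y)
  have hbregman := bregman_sub_bregman_le_of_sub_eq_smul F gradF hconvex hstep1 xs
  have hquad := agss_quadratic_energy_sub hμ.ne' B (yk - xs) (yk1 - xs) (xhat - xs)
    (gradF xhat - gradF xs) (by
      rw [sub_sub_sub_cancel_right, sub_sub_sub_cancel_right, hstep2, agss_residual_eq B hxs])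
  rw [sub_sub_sub_cancel_right] at hquad
  have hgap := bregman_add_half_mul_dotProduct_self_le F gradF hlower xhat xs
  have hαS : α * specNorm (B + Bᵀ) ≤ μ / 2 :=
    mul_le_of_le_div₀ (by positivity) (norm_nonneg _) (by rwa [div_div])
  obtain ⟨hδ, -⟩ := dotProduct_smul_one_sub_smul_mulVec_self_bounds _ hα0.le hαS (yk1 - yk)
  obtain ⟨-, hu⟩ := dotProduct_smul_one_sub_smul_mulVec_self_bounds _ hα0.le hαS (yk1 - xs)
  have hsplit : (gradF xhat - gradF xs) ⬝ᵥ (yk - xhat) = (gradF xhat - gradF xs) ⬝ᵥ (yk1 - xs)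
      - (gradF xhat - gradF xs) ⬝ᵥ (yk1 - yk) - (gradF xhat - gradF xs) ⬝ᵥ (xhat - xs) := by
    rw [← dotProduct_sub, ← dotProduct_sub]; congr 1; abel
  rw [hsplit] at hbregman
  unfold bregman at hbregman hgap
  have hdissipation : μ * ((yk1 - xs) ⬝ᵥ (xhat - xs) - (yk1 - xs) ⬝ᵥ (yk1 - xs))
      - (gradF xhat - gradF xs) ⬝ᵥ (xhat - xs)
      ≤ -(1 / 2 * ((F xhat - F xs - gradF xs ⬝ᵥ (xhat - xs))
            + (1 / 2) * ((yk1 - xs) ⬝ᵥ ((μ • 1 - α • (B + Bᵀ)).mulVec (yk1 - xs))))) := by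
    linarith [mul_le_mul_of_nonneg_left (two_mul_dotProduct_le_add (yk1 - xs) (xhat - xs)) hμ.le,
      hlower xhat xs, mul_nonneg hμ.le (dotProduct_self_nonneg (yk1 - xs)),
      mul_nonneg hμ.le (dotProduct_self_nonneg (xhat - xs))]
  linarith [mul_le_mul_of_nonneg_left hdissipation hα0.le]

/-- **One-step decay of the explicit AGSS scheme.**
For `F ∈ S_{μ,L_F}` (`μ > 0`), `N = Bˢʸᵐ - 2B` skew-symmetric with `Bˢʸᵐ = B + Bᵀ`,
`∇F(x*) + Nx* = 0`, step `0 < α ≤ μ/(2‖Bˢʸᵐ‖)`, and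
`(x̂₊ - x)/α = y - x̂₊`, `(y₊ - y)/α = x̂₊ - y₊ - (1/μ)(∇F(x̂₊) + Bˢʸᵐy - 2By₊)`,
the modified Lyapunov function `E(x,y) = D_F(x,x*) + ½‖y-x*‖²_{μI-αBˢʸᵐ}` satisfies
`E(x̂₊,y₊) - E(x,y) ≤ -(α/2)E(x̂₊,y₊) - α⟨∇F(x̂₊)-∇F(x*), y₊-y⟩ - (μ/4)‖y₊-y‖²`. -/
theorem agss_one_step_decay
    {n : ℕ} (μ LF α : ℝ) (hμ : 0 < μ)
    (F : (Fin n → ℝ) → ℝ) (gradF : (Fin n → ℝ) → (Fin n → ℝ))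
    (hdiff : ∀ x, HasFDerivAt F (dpCLM (gradF x)) x)
    (hlower : ∀ x y : Fin n → ℝ,
      μ / 2 * ((x - y) ⬝ᵥ (x - y)) ≤ F x - F y - gradF y ⬝ᵥ (x - y))
    (hupper : ∀ x y : Fin n → ℝ,
      F x - F y - gradF y ⬝ᵥ (x - y) ≤ LF / 2 * ((x - y) ⬝ᵥ (x - y)))
    (N B : Matrix (Fin n) (Fin n) ℝ)
    (hskew : Nᵀ = -N)
    (hNB : N = (B + Bᵀ) - (2 : ℝ) • B)
    (xs : Fin n → ℝ) (hxs : gradF xs + N.mulVec xs = 0)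
    (hα0 : 0 < α) (hα1 : α ≤ μ / (2 * specNorm (B + Bᵀ)))
    (xk yk xhat yk1 : Fin n → ℝ)
    (hstep1 : xhat - xk = α • (yk - xhat))
    (hstep2 : yk1 - yk =
      α • (xhat - yk1 - (1 / μ) • (gradF xhat + (B + Bᵀ).mulVec yk
        - (2 : ℝ) • B.mulVec yk1))) :
    ((F xhat - F xs - gradF xs ⬝ᵥ (xhat - xs))
        + (1 / 2) * ((yk1 - xs) ⬝ᵥ ((μ • 1 - α • (B + Bᵀ)).mulVec (yk1 - xs))))
      - ((F xk - F xs - gradF xs ⬝ᵥ (xk - xs))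
        + (1 / 2) * ((yk - xs) ⬝ᵥ ((μ • 1 - α • (B + Bᵀ)).mulVec (yk - xs))))
      ≤ -(α / 2 * ((F xhat - F xs - gradF xs ⬝ᵥ (xhat - xs))
            + (1 / 2) * ((yk1 - xs) ⬝ᵥ ((μ • 1 - α • (B + Bᵀ)).mulVec (yk1 - xs)))))
        - α * ((gradF xhat - gradF xs) ⬝ᵥ (yk1 - yk))
        - μ / 4 * ((yk1 - yk) ⬝ᵥ (yk1 - yk)) :=
  agss_one_step_decay_general μ α hμ F gradF hlower N B hNB xs hxs hα0 hα1 xk yk xhat yk1 hstep1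
    hstep2
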